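/- arXiv:1910.08850 — 5 statements merged into one kernel-verified Lean document; each statement's English description precedes it below -/
import Mathlib

section
/- Let $\mathcal{F}$ be a finite family of contraction maps on a complete metric space $X$ with attractor $K_{\mathcal{F}}$ (the unique nonempty compact set with $K_{\mathcal{F}} = \bigcup_{\phi \in \mathcal{F}} \phi(K_{\mathcal{F}})$). If $K_{\mathcal{F}}$ is connected, has positive diameter, and some $\phi \in \mathcal{F}$ has Lipschitz constant $0$ (i.e., $\phi$ is constant on $K_\mathcal{F}$), then $K_{\mathcal{F}}$ equals the attractor of the smaller system $\mathcal{F} \setminus \{\phi\}$. -/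
open Set

/-- If the attractor `K` of an IFS `F` of contractions is connected with positive diameter
and some `φ ∈ F` has Lipschitz constant `0`, then `K` is also the attractor of `F \ {φ}`,
i.e. `K` satisfies the invariance equation for the smaller system. -/
theorem stmt4 {X : Type*} [MetricSpace X] [CompleteSpace X]
    (F : Finset (X → X))
    (hcontr : ∀ φ ∈ F, ∃ r : NNReal, r < 1 ∧ LipschitzWith r φ)
    (K : Set X) (hKne : K.Nonempty) (hKc : IsCompact K)
    (hK : K = ⋃ φ ∈ F, φ '' K)
    (hconn : IsConnected K) (hdiam : 0 < Metric.diam K)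
    (φ : X → X) (hφ : φ ∈ F) (hφ0 : LipschitzWith 0 φ) :
    K = ⋃ ψ ∈ (↑F : Set (X → X)) \ {φ}, ψ '' K := by
  obtain ⟨x₀, hx₀⟩ := hKne
  set c : X := φ x₀ with hc
  have hconst : ∀ x, φ x = c := by
    intro x
    have h := hφ0.dist_le_mul x x₀
    simp only [NNReal.coe_zero, zero_mul] at h
    exact dist_le_zero.mp h
  set A : Set X := ⋃ ψ ∈ (↑F : Set (X → X)) \ {φ}, ψ '' K with hA
  -- each image is a subset of K
  have himg : ∀ ψ ∈ F, ψ '' K ⊆ K := by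
    intro ψ hψ
    conv_rhs => rw [hK]
    exact subset_iUnion₂ (s := fun g _ => g '' K) ψ hψ
  have hAK : A ⊆ K := by
    refine iUnion₂_subset ?_
    rintro ψ ⟨hψF, -⟩
    exact himg ψ hψF
  have hcK : c ∈ K := himg φ hφ ⟨x₀, hx₀, rfl⟩
  -- K ⊆ {c} ∪ A
  have hcover : K ⊆ {c} ∪ A := by
    intro x hx
    rw [hK] at hx
    obtain ⟨ψ, hψ, y, hy, rfl⟩ := mem_iUnion₂.mp hx
    by_cases hψφ : ψ = φ
    · left; rw [hψφ, hconst y]; rfl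
    · right; exact mem_biUnion ⟨hψ, hψφ⟩ ⟨y, hy, rfl⟩
  -- A is compact hence closed
  have hAc : IsCompact A := by
    refine (F.finite_toSet.subset diff_subset).isCompact_biUnion ?_
    rintro ψ ⟨hψF, -⟩
    obtain ⟨r, -, hlip⟩ := hcontr ψ hψF
    exact hKc.image hlip.continuous
  -- A is nonempty in K : there is x ∈ K with x ≠ c
  obtain ⟨x₁, hx₁K, hx₁c⟩ : ∃ x ∈ K, x ≠ c := by
    by_contra h
    push_neg at h
    have : K ⊆ {c} := fun x hx => h x hx
    have : Metric.diam K ≤ Metric.diam ({c} : Set X) :=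
      Metric.diam_mono this Bornology.isBounded_singleton
    simp [Metric.diam_singleton] at this
    exact absurd (le_antisymm this Metric.diam_nonneg) (ne_of_gt hdiam)
  have hx₁A : x₁ ∈ A := by
    rcases hcover hx₁K with h | h
    · exact absurd h hx₁c
    · exact h
  -- connectedness: c ∈ A
  have hcA : c ∈ A := by
    by_contra hcA
    have := (isPreconnected_closed_iff.mp hconn.isPreconnected) {c} A
      isClosed_singleton hAc.isClosed hcover ⟨c, hcK, rfl⟩ ⟨x₁, hx₁K, hx₁A⟩
    obtain ⟨z, -, hz1, hz2⟩ := this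
    rw [mem_singleton_iff] at hz1
    exact hcA (hz1 ▸ hz2)
  apply Subset.antisymm _ hAK
  intro x hx
  rcases hcover hx with h | h
  · exact (mem_singleton_iff.mp h) ▸ hcA
  · exact h
end

section
/- Let $\mathcal{F}$ be an iterated function system generated by similarities on a complete metric space $X$, with similarity dimension $s$ (the unique solution of $\sum_{\phi \in \mathcal{F}} (\operatorname{Lip} \phi)^s = 1$, assuming all ratios are in $(0,1)$). If the attractor $K_{\mathcal{F}}$ satisfies $\mathcal{H}^s(K_{\mathcal{F}}) > 0$, then $K_{\mathcal{F}}$ is Ahlfors $s$-regular: there is a constant $C \geq 1$ with $C^{-1} r^s \leq \mathcal{H}^s(K_{\mathcal{F}} \cap B(x,r)) \leq C r^s$ for all $x \in K_{\mathcal{F}}$ and $0 < r \leq \operatorname{diam} K_{\mathcal{F}}$. -/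
/-!
The similarity dimension makes the Hausdorff measure of `K` equal to its Hausdorff content:
pushing a countable cover of `K` through all compositions of `n` maps of the system gives covers
of `K` with no larger `∑ diam ^ s` (because `∑ Lᵢ ^ s = 1`) and diameters shrinking like
`(max Lᵢ) ^ n`. The content is subadditive and dominated by `μH[s]`, so the equality passes to
`K ∩ B` for Borel `B`; hence `μH[s] (K ∩ B(x, r)) ≤ (diam B(x, r)) ^ s ≤ (2r) ^ s`.
For the lower bound, descend along the cylinders `φ_{i₁} ∘ ⋯ ∘ φ_{iₙ} '' K` containing `x` until
the ratio first drops below `r / diam K`: that cylinder lies in `B(x, r)` and has measure at least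
`(min Lᵢ * r / diam K) ^ s * μH[s] K`, which is positive.
-/

open Set Metric MeasureTheory Filter
open scoped ENNReal NNReal Topology

section SelfSimilar

variable {X : Type*} [MetricSpace X]

noncomputable def hausdorffContent (s : ℝ) : OuterMeasure X :=
  OuterMeasure.boundedBy fun A => ediam A ^ s

theorem hausdorffContent_le_ediam_rpow (s : ℝ) (A : Set X) :
    hausdorffContent s A ≤ ediam A ^ s :=
  OuterMeasure.boundedBy_le A

theorem hausdorffContent_le_hausdorffMeasure [MeasurableSpace X] [BorelSpace X]
    (s : ℝ) (A : Set X) : hausdorffContent s A ≤ μH[s] A := by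
  rw [hausdorffContent, OuterMeasure.boundedBy_apply, Measure.hausdorffMeasure_apply]
  refine le_iSup₂_of_le 1 one_pos ?_
  exact iInf_mono fun t => iInf_mono fun _ => le_iInf fun _ => le_rfl

theorem hausdorffMeasure_inter_le_hausdorffContent [MeasurableSpace X] [BorelSpace X]
    {s : ℝ} {K B : Set X} (hK : μH[s] K ≤ hausdorffContent s K) (hfin : μH[s] K ≠ ∞)
    (hB : MeasurableSet B) : μH[s] (K ∩ B) ≤ hausdorffContent s (K ∩ B) := by
  have hdiff : μH[s] (K \ B) ≠ ∞ := ne_top_of_le_ne_top hfin (measure_mono sdiff_subset)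
  refine (ENNReal.add_le_add_iff_right hdiff).1 ?_
  calc μH[s] (K ∩ B) + μH[s] (K \ B) = μH[s] K := measure_inter_add_sdiff K hB
    _ ≤ hausdorffContent s K := hK
    _ ≤ hausdorffContent s (K ∩ B) + hausdorffContent s (K \ B) :=
      measure_le_inter_add_sdiff _ K B
    _ ≤ hausdorffContent s (K ∩ B) + μH[s] (K \ B) :=
      add_le_add_right (hausdorffContent_le_hausdorffMeasure s _) _

theorem hausdorffMeasure_inter_closedBall_le [MeasurableSpace X] [BorelSpace X] {s : ℝ}
    {K : Set X} (hK : μH[s] K ≤ hausdorffContent s K) (hfin : μH[s] K ≠ ∞) (hs : 0 ≤ s)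
    (x : X) {r : ℝ} (hr : 0 ≤ r) : μH[s] (K ∩ closedBall x r) ≤ ENNReal.ofReal ((2 * r) ^ s) := by
  have hdiam : ediam (K ∩ closedBall x r) ≤ ENNReal.ofReal (2 * r) :=
    ediam_le_of_forall_dist_le fun y hy z hz => (dist_triangle_right y z x).trans
      (by linarith [mem_closedBall.1 hy.2, mem_closedBall.1 hz.2])
  calc μH[s] (K ∩ closedBall x r) ≤ hausdorffContent s (K ∩ closedBall x r) :=
        hausdorffMeasure_inter_le_hausdorffContent hK hfin measurableSet_closedBall
    _ ≤ ediam (K ∩ closedBall x r) ^ s := hausdorffContent_le_ediam_rpow s _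
    _ ≤ ENNReal.ofReal (2 * r) ^ s := ENNReal.rpow_le_rpow hdiam hs
    _ = ENNReal.ofReal ((2 * r) ^ s) := ENNReal.ofReal_rpow_of_nonneg (by positivity) hs

theorem tsum_ediam_rpow_image_le {α : Type*} (f : α → X) (𝒰 : Set (Set α)) (s : ℝ) :
    ∑' V : image f '' 𝒰, ediam (V : Set X) ^ s ≤ ∑' U : 𝒰, ediam (f '' U) ^ s :=
  ENNReal.tsum_le_tsum_comp_of_surjective imageFactorization_surjective
    (fun V : image f '' 𝒰 => ediam (V : Set X) ^ s)

section Lipschitz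

variable {ι : Type*} [Fintype ι] {φ : ι → X → X} {c : ι → ℝ≥0} {s : ℝ} {K : Set X}

theorem exists_refined_cover_of_subset_iUnion_image (hφ : ∀ i, LipschitzWith (c i) (φ i))
    (hs : 0 ≤ s) (hsum : ∑ i, (c i : ℝ≥0∞) ^ s ≤ 1) (hK : K ⊆ ⋃ i, φ i '' K)
    {b : ℝ≥0} (hcb : ∀ i, c i ≤ b) {δ : ℝ≥0∞} {𝒰 : Set (Set X)} (h𝒰 : 𝒰.Countable)
    (hK𝒰 : K ⊆ ⋃₀ 𝒰) (hδ : ∀ U ∈ 𝒰, ediam U ≤ δ) :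
    ∃ 𝒱 : Set (Set X), 𝒱.Countable ∧ K ⊆ ⋃₀ 𝒱 ∧ (∀ V ∈ 𝒱, ediam V ≤ b * δ) ∧
      ∑' V : 𝒱, ediam (V : Set X) ^ s ≤ ∑' U : 𝒰, ediam (U : Set X) ^ s := by
  refine ⟨⋃ i, image (φ i) '' 𝒰, countable_iUnion fun i => h𝒰.image _, ?_, ?_, ?_⟩
  · intro x hx
    obtain ⟨i, y, hy, rfl⟩ := mem_iUnion.1 (hK hx)
    obtain ⟨U, hU, hyU⟩ := mem_sUnion.1 (hK𝒰 hy)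
    exact mem_sUnion.2 ⟨φ i '' U, mem_iUnion.2 ⟨i, mem_image_of_mem _ hU⟩, mem_image_of_mem _ hyU⟩
  · simp only [mem_iUnion, mem_image]
    rintro - ⟨i, U, hU, rfl⟩
    calc ediam (φ i '' U) ≤ c i * ediam U := (hφ i).ediam_image_le U
      _ ≤ b * δ := mul_le_mul' (ENNReal.coe_le_coe.2 (hcb i)) (hδ U hU)
  · calc ∑' V : ⋃ i, image (φ i) '' 𝒰, ediam (V : Set X) ^ s
        ≤ ∑ i, ∑' V : image (φ i) '' 𝒰, ediam (V : Set X) ^ s :=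
          ENNReal.tsum_iUnion_le (fun V => ediam V ^ s) _
      _ ≤ ∑ i, ∑' U : 𝒰, (c i : ℝ≥0∞) ^ s * ediam (U : Set X) ^ s := by
        gcongr with i
        refine (tsum_ediam_rpow_image_le _ _ s).trans (ENNReal.tsum_le_tsum fun U => ?_)
        rw [← ENNReal.mul_rpow_of_nonneg _ _ hs]
        exact ENNReal.rpow_le_rpow ((hφ i).ediam_image_le U) hs
      _ = (∑ i, (c i : ℝ≥0∞) ^ s) * ∑' U : 𝒰, ediam (U : Set X) ^ s := by
        simp only [ENNReal.tsum_mul_left, Finset.sum_mul]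
      _ ≤ ∑' U : 𝒰, ediam (U : Set X) ^ s := mul_le_of_le_one_left zero_le hsum

theorem exists_cover_ediam_le_pow_mul (hφ : ∀ i, LipschitzWith (c i) (φ i))
    (hs : 0 ≤ s) (hsum : ∑ i, (c i : ℝ≥0∞) ^ s ≤ 1) (hK : K ⊆ ⋃ i, φ i '' K)
    {b : ℝ≥0} (hcb : ∀ i, c i ≤ b) {δ : ℝ≥0∞} {𝒰 : Set (Set X)} (h𝒰 : 𝒰.Countable)
    (hK𝒰 : K ⊆ ⋃₀ 𝒰) (hδ : ∀ U ∈ 𝒰, ediam U ≤ δ) (n : ℕ) :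
    ∃ 𝒱 : Set (Set X), 𝒱.Countable ∧ K ⊆ ⋃₀ 𝒱 ∧ (∀ V ∈ 𝒱, ediam V ≤ b ^ n * δ) ∧
      ∑' V : 𝒱, ediam (V : Set X) ^ s ≤ ∑' U : 𝒰, ediam (U : Set X) ^ s := by
  induction n with
  | zero => exact ⟨𝒰, h𝒰, hK𝒰, by simpa using hδ, le_rfl⟩
  | succ n ih =>
    obtain ⟨𝒱, h𝒱, hK𝒱, hδ𝒱, h𝒱𝒰⟩ := ih
    obtain ⟨𝒲, h𝒲, hK𝒲, hδ𝒲, h𝒲𝒱⟩ :=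
      exists_refined_cover_of_subset_iUnion_image hφ hs hsum hK hcb h𝒱 hK𝒱 hδ𝒱
    exact ⟨𝒲, h𝒲, hK𝒲, fun W hW => (hδ𝒲 W hW).trans_eq (by rw [pow_succ', mul_assoc]),
      h𝒲𝒱.trans h𝒱𝒰⟩

theorem hausdorffMeasure_le_hausdorffContent_of_subset_iUnion_image [MeasurableSpace X]
    [BorelSpace X] (hφ : ∀ i, LipschitzWith (c i) (φ i)) (hc : ∀ i, c i < 1) (hs : 0 < s)
    (hsum : ∑ i, (c i : ℝ≥0∞) ^ s ≤ 1) (hK : K ⊆ ⋃ i, φ i '' K) :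
    μH[s] K ≤ hausdorffContent s K := by
  rw [hausdorffContent, OuterMeasure.boundedBy_apply]
  refine le_iInf₂ fun t hKt => ?_
  have hempty (A : Set X) : (⨆ _ : A.Nonempty, ediam A ^ s) = ediam A ^ s := by
    rcases A.eq_empty_or_nonempty with rfl | hA
    · simp [ENNReal.zero_rpow_of_pos hs]
    · simp [hA]
  simp only [hempty]
  set S := ∑' n, ediam (t n) ^ s
  rcases eq_or_ne S ∞ with hS | hS
  · simp [hS]
  have hSt : ∑' U : range t, ediam (U : Set X) ^ s ≤ S :=
    ENNReal.tsum_le_tsum_comp_of_surjective rangeFactorization_surjective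
      (fun U : range t => ediam (U : Set X) ^ s)
  have hδ : ∀ U ∈ range t, ediam U ≤ S ^ s⁻¹ := by
    rintro - ⟨n, rfl⟩
    exact (ENNReal.le_rpow_inv_iff hs).2 (ENNReal.le_tsum n)
  set b : ℝ≥0 := Finset.univ.sup c
  have hb : b < 1 := (Finset.sup_lt_iff zero_lt_one).2 fun i _ => hc i
  choose 𝒰 h𝒰 hK𝒰 hδ𝒰 h𝒰S using exists_cover_ediam_le_pow_mul hφ hs.le hsum hK
    (fun i => Finset.le_sup (Finset.mem_univ i)) (countable_range t) (by rwa [sUnion_range]) hδ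
  have : ∀ n, Countable (𝒰 n) := fun n => (h𝒰 n).to_subtype
  have hr : Tendsto (fun n => (b : ℝ≥0∞) ^ n * S ^ s⁻¹) atTop (𝓝 0) := by
    simpa using ENNReal.Tendsto.mul_const (ENNReal.tendsto_pow_atTop_nhds_zero_of_lt_one
      (ENNReal.coe_lt_one_iff.2 hb)) (Or.inr (ENNReal.rpow_ne_top_of_nonneg (by positivity) hS))
  calc μH[s] K ≤ liminf (fun n => ∑' U : 𝒰 n, ediam (U : Set X) ^ s) atTop :=
        Measure.hausdorffMeasure_le_liminf_tsum s K _ hr (fun n (U : 𝒰 n) => (U : Set X))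
          (Eventually.of_forall fun n U => hδ𝒰 n U U.2)
          (Eventually.of_forall fun n => by rw [← sUnion_eq_iUnion]; exact hK𝒰 n)
    _ ≤ S := liminf_le_of_frequently_le' (Frequently.of_forall fun n => (h𝒰S n).trans hSt)

end Lipschitz

theorem ofReal_rpow_mul_hausdorffMeasure_le_image [MeasurableSpace X] [BorelSpace X]
    {Y : Type*} [MetricSpace Y] [MeasurableSpace Y] [BorelSpace Y] {f : X → Y} {q : ℝ}
    (hq : 0 < q) (hf : ∀ y z, dist (f y) (f z) = q * dist y z) {s : ℝ} (hs : 0 ≤ s)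
    (A : Set X) : ENNReal.ofReal (q ^ s) * μH[s] A ≤ μH[s] (f '' A) := by
  lift q to ℝ≥0 using hq.le
  have hq0 : q ≠ 0 := by exact_mod_cast hq.ne'
  have hanti : AntilipschitzWith q⁻¹ f := AntilipschitzWith.of_le_mul_dist fun y z => by
    rw [hf, NNReal.coe_inv, inv_mul_cancel_left₀ (by exact_mod_cast hq0)]
  calc ENNReal.ofReal ((q : ℝ) ^ s) * μH[s] A
      ≤ (q : ℝ≥0∞) ^ s * ((q⁻¹ : ℝ≥0) ^ s * μH[s] (f '' A)) := by
        rw [← ENNReal.ofReal_rpow_of_nonneg q.coe_nonneg hs, ENNReal.ofReal_coe_nnreal]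
        gcongr
        exact hanti.le_hausdorffMeasure_image hs A
    _ = μH[s] (f '' A) := by
        rw [← mul_assoc, ← ENNReal.mul_rpow_of_nonneg _ _ hs, ENNReal.coe_inv hq0,
          ENNReal.mul_inv_cancel (by exact_mod_cast hq0) ENNReal.coe_ne_top,
          ENNReal.one_rpow, one_mul]

section Similarity

variable {ι : Type*} {φ : ι → X → X} {L : ι → ℝ} {K : Set X}

theorem hausdorffMeasure_le_hausdorffContent_of_similarity [Fintype ι] [MeasurableSpace X]
    [BorelSpace X] {s : ℝ} (hsim : ∀ i x y, dist (φ i x) (φ i y) = L i * dist x y)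
    (hL0 : ∀ i, 0 ≤ L i) (hL1 : ∀ i, L i < 1) (hs : 0 < s) (hsum : ∑ i, L i ^ s ≤ 1)
    (hK : K ⊆ ⋃ i, φ i '' K) : μH[s] K ≤ hausdorffContent s K := by
  refine hausdorffMeasure_le_hausdorffContent_of_subset_iUnion_image
    (c := fun i => (L i).toNNReal)
    (fun i => LipschitzWith.of_dist_le_mul fun x y => by rw [hsim, Real.coe_toNNReal _ (hL0 i)])
    (fun i => Real.toNNReal_lt_one.2 (hL1 i)) hs ?_ hK
  calc ∑ i, ((L i).toNNReal : ℝ≥0∞) ^ s = ENNReal.ofReal (∑ i, L i ^ s) := by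
        rw [ENNReal.ofReal_sum_of_nonneg fun i _ => Real.rpow_nonneg (hL0 i) s]
        exact Finset.sum_congr rfl fun i _ => ENNReal.ofReal_rpow_of_nonneg (hL0 i) hs.le
    _ ≤ 1 := ENNReal.ofReal_le_one.2 hsum

theorem exists_similarity_mem_image_subset
    (hsim : ∀ i x y, dist (φ i x) (φ i y) = L i * dist x y) (hL : ∀ i, 0 < L i) {a b : ℝ}
    (haL : ∀ i, a ≤ L i) (ha : a ≤ 1) (hLb : ∀ i, L i ≤ b)
    (hsub : ∀ i, φ i '' K ⊆ K) (hK : K ⊆ ⋃ i, φ i '' K) (n : ℕ) :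
    ∀ x ∈ K, ∀ t : ℝ, b ^ n ≤ t → t ≤ 1 → ∃ (ψ : X → X) (q : ℝ), a * t ≤ q ∧ q ≤ t ∧
      (∀ y z, dist (ψ y) (ψ z) = q * dist y z) ∧ ψ '' K ⊆ K ∧ x ∈ ψ '' K := by
  induction n with
  | zero =>
    intro x hx t ht ht1
    obtain rfl : t = 1 := le_antisymm ht1 (by simpa using ht)
    exact ⟨id, 1, by simpa using ha, le_rfl, by simp, by simp, by simpa using hx⟩
  | succ n ih =>
    intro x hx t ht ht1
    obtain ⟨i, y, hy, rfl⟩ := mem_iUnion.1 (hK hx)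
    rcases le_or_gt (L i) t with hLt | htL
    · refine ⟨φ i, L i, ?_, hLt, hsim i, hsub i, mem_image_of_mem _ hy⟩
      exact (mul_le_mul_of_nonneg_right (haL i) ((hL i).le.trans hLt)).trans
        (mul_le_of_le_one_right (hL i).le ht1)
    · have hbt : b ^ n ≤ t / L i := by
        rw [le_div_iff₀ (hL i)]
        calc b ^ n * L i ≤ b ^ n * b :=
              mul_le_mul_of_nonneg_left (hLb i) (pow_nonneg ((hL i).le.trans (hLb i)) n)
          _ ≤ t := by rwa [← pow_succ]
      obtain ⟨ψ, q, hqt, hqt', hψ, hψK, hyψ⟩ :=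
        ih y hy (t / L i) hbt ((div_le_one (hL i)).2 htL.le)
      refine ⟨φ i ∘ ψ, L i * q, ?_, ?_, ?_, ?_, ?_⟩
      · calc a * t = L i * (a * (t / L i)) := by rw [mul_left_comm, mul_div_cancel₀ _ (hL i).ne']
          _ ≤ L i * q := mul_le_mul_of_nonneg_left hqt (hL i).le
      · calc L i * q ≤ L i * (t / L i) := mul_le_mul_of_nonneg_left hqt' (hL i).le
          _ = t := mul_div_cancel₀ _ (hL i).ne'
      · intro y z
        simp only [Function.comp_apply, hsim, hψ, mul_assoc]
      · rw [image_comp]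
        exact (image_mono hψK).trans (hsub i)
      · rw [image_comp]
        exact mem_image_of_mem _ hyψ

theorem le_hausdorffMeasure_inter_closedBall [MeasurableSpace X] [BorelSpace X]
    (hsim : ∀ i x y, dist (φ i x) (φ i y) = L i * dist x y) (hL : ∀ i, 0 < L i) {a b : ℝ}
    (ha : 0 < a) (haL : ∀ i, a ≤ L i) (ha1 : a ≤ 1) (hLb : ∀ i, L i ≤ b) (hb : b < 1)
    (hsub : ∀ i, φ i '' K ⊆ K) (hK : K ⊆ ⋃ i, φ i '' K) (hKb : Bornology.IsBounded K)
    {s : ℝ} (hs : 0 ≤ s) {x : X} (hx : x ∈ K) {r : ℝ} (hr : 0 < r) (hrD : r ≤ diam K) :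
    ENNReal.ofReal ((a / diam K * r) ^ s) * μH[s] K ≤ μH[s] (K ∩ closedBall x r) := by
  have hD : 0 < diam K := hr.trans_le hrD
  obtain ⟨n, hn⟩ := exists_pow_lt_of_lt_one (div_pos hr hD) hb
  obtain ⟨ψ, q, haq, hq, hψ, hψK, z, hz, rfl⟩ := exists_similarity_mem_image_subset hsim hL haL
    ha1 hLb hsub hK n x hx (r / diam K) hn.le ((div_le_one hD).2 hrD)
  have hψball : ψ '' K ⊆ K ∩ closedBall (ψ z) r := by
    rintro - ⟨y, hy, rfl⟩
    refine ⟨hψK (mem_image_of_mem _ hy), ?_⟩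
    calc dist (ψ y) (ψ z) = q * dist y z := hψ y z
      _ ≤ r / diam K * diam K :=
        mul_le_mul hq (dist_le_diam_of_mem hKb hy hz) dist_nonneg (div_pos hr hD).le
      _ = r := div_mul_cancel₀ r hD.ne'
  have hq0 : 0 < q := (mul_pos ha (div_pos hr hD)).trans_le haq
  rw [div_mul_eq_mul_div, mul_div_assoc]
  calc ENNReal.ofReal ((a * (r / diam K)) ^ s) * μH[s] K
      ≤ ENNReal.ofReal (q ^ s) * μH[s] K := by gcongr
    _ ≤ μH[s] (ψ '' K) := ofReal_rpow_mul_hausdorffMeasure_le_image hq0 hψ hs K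
    _ ≤ μH[s] (K ∩ closedBall (ψ z) r) := measure_mono hψball

end Similarity

theorem exists_one_le_ahlfors_bounds [MeasurableSpace X] {μ : Measure X} {K : Set X}
    {s c₁ c₂ : ℝ} (hc₁ : 0 < c₁)
    (hlow : ∀ x ∈ K, ∀ r : ℝ, 0 < r → r ≤ diam K →
      ENNReal.ofReal (c₁ * r ^ s) ≤ μ (K ∩ closedBall x r))
    (hup : ∀ x ∈ K, ∀ r : ℝ, 0 < r → μ (K ∩ closedBall x r) ≤ ENNReal.ofReal (c₂ * r ^ s)) :
    ∃ C : ℝ, 1 ≤ C ∧ ∀ x ∈ K, ∀ r : ℝ, 0 < r → r ≤ diam K →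
      ENNReal.ofReal (C⁻¹ * r ^ s) ≤ μ (K ∩ closedBall x r) ∧
      μ (K ∩ closedBall x r) ≤ ENNReal.ofReal (C * r ^ s) := by
  refine ⟨max 1 (max c₂ c₁⁻¹), le_max_left _ _, fun x hx r hr hrD =>
    ⟨le_trans ?_ (hlow x hx r hr hrD), (hup x hx r hr).trans ?_⟩⟩
  · gcongr
    exact inv_le_of_inv_le₀ hc₁ ((le_max_right _ _).trans (le_max_right _ _))
  · gcongr
    exact (le_max_left _ _).trans (le_max_right _ _)

end SelfSimilar

theorem stmt5_general {X : Type*} [MetricSpace X]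
    [MeasurableSpace X] [BorelSpace X]
    {k : ℕ} (φ : Fin k → X → X) (L : Fin k → ℝ)
    (hL : ∀ i, 0 < L i ∧ L i < 1)
    (hsim : ∀ i x y, dist (φ i x) (φ i y) = L i * dist x y)
    (s : ℝ) (hs : 0 < s) (hdim : ∑ i, L i ^ s = 1)
    (K : Set X) (hKc : IsCompact K)
    (hK : K = ⋃ i, φ i '' K)
    (hpos : 0 < μH[s] K) :
    ∃ C : ℝ, 1 ≤ C ∧ ∀ x ∈ K, ∀ r : ℝ, 0 < r → r ≤ Metric.diam K →
      ENNReal.ofReal (C⁻¹ * r ^ s) ≤ μH[s] (K ∩ Metric.closedBall x r) ∧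
      μH[s] (K ∩ Metric.closedBall x r) ≤ ENNReal.ofReal (C * r ^ s) := by
  have hsub (i : Fin k) : φ i '' K ⊆ K := (subset_iUnion (fun j => φ j '' K) i).trans hK.ge
  have hcontent : μH[s] K ≤ hausdorffContent s K :=
    hausdorffMeasure_le_hausdorffContent_of_similarity hsim (fun i => (hL i).1.le)
      (fun i => (hL i).2) hs hdim.le hK.le
  have hdiam : μH[s] K ≤ ediam K ^ s := hcontent.trans (hausdorffContent_le_ediam_rpow s K)
  have hfin : μH[s] K ≠ ∞ :=
    ne_top_of_le_ne_top (ENNReal.rpow_ne_top_of_nonneg hs.le hKc.isBounded.ediam_ne_top) hdiam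
  have hD : 0 < diam K := by
    refine ENNReal.toReal_pos (fun h0 => hpos.ne' (le_antisymm ?_ zero_le))
      hKc.isBounded.ediam_ne_top
    rwa [h0, ENNReal.zero_rpow_of_pos hs] at hdiam
  obtain ⟨x₀, hx₀⟩ := nonempty_of_measure_ne_zero hpos.ne'
  have : Nonempty (Fin k) := ⟨(mem_iUnion.1 (hK.le hx₀)).choose⟩
  obtain ⟨i₀, hi₀⟩ := Finite.exists_min L
  obtain ⟨j₀, hj₀⟩ := Finite.exists_max L
  have ha := (hL i₀).1
  refine exists_one_le_ahlfors_bounds (c₁ := (L i₀ / diam K) ^ s * (μH[s] K).toReal)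
    (c₂ := 2 ^ s) (mul_pos (by positivity) (ENNReal.toReal_pos hpos.ne' hfin))
    (fun x hx r hr hrD => ?_) (fun x _ r hr => ?_)
  · rw [mul_right_comm, ← Real.mul_rpow (by positivity) hr.le,
      ENNReal.ofReal_mul (by positivity), ENNReal.ofReal_toReal hfin]
    exact le_hausdorffMeasure_inter_closedBall hsim (fun i => (hL i).1) ha hi₀ (hL i₀).2.le
      hj₀ (hL j₀).2 hsub hK.le hKc.isBounded hs.le hx hr hrD
  · rw [← Real.mul_rpow zero_le_two hr.le]
    exact hausdorffMeasure_inter_closedBall_le hcontent hfin hs.le x hr.le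

/-- A self-similar set with positive `s`-dimensional Hausdorff measure (where `s` is the
similarity dimension) is Ahlfors `s`-regular. -/
theorem stmt5 {X : Type*} [MetricSpace X] [CompleteSpace X]
    [MeasurableSpace X] [BorelSpace X]
    {k : ℕ} (hk : 0 < k) (φ : Fin k → X → X) (L : Fin k → ℝ)
    (hL : ∀ i, 0 < L i ∧ L i < 1)
    (hsim : ∀ i x y, dist (φ i x) (φ i y) = L i * dist x y)
    (s : ℝ) (hs : 0 < s) (hdim : ∑ i, L i ^ s = 1)
    (K : Set X) (hKne : K.Nonempty) (hKc : IsCompact K)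
    (hK : K = ⋃ i, φ i '' K)
    (hpos : 0 < μH[s] K) :
    ∃ C : ℝ, 1 ≤ C ∧ ∀ x ∈ K, ∀ r : ℝ, 0 < r → r ≤ Metric.diam K →
      ENNReal.ofReal (C⁻¹ * r ^ s) ≤ μH[s] (K ∩ Metric.closedBall x r) ∧
      μH[s] (K ∩ Metric.closedBall x r) ≤ ENNReal.ofReal (C * r ^ s) :=
  stmt5_general φ L hL hsim s hs hdim K hKc hK hpos
end

section
/- Let $1 \leq t < s$, $M > 0$, $0 < \xi_1 \leq \xi_2 < 1$, $\alpha,\beta > 0$, and let $X$ be a Banach space. Suppose $(\rho_j)_{j \geq 0}$ is a sequence of positive scales with $\rho_0 = 1$ and $\xi_1 \rho_j \leq \rho_{j+1} \leq \xi_2 \rho_j$ for all $j$, and $(f_j)_{j \geq 0}$ is a sequence of maps $f_j : [0,M] \to X$ satisfying: (i) $|f_j(x) - f_j(y)| \leq \alpha \rho_j^{1 - s/t} |x-y|^{1/t}$ for all $x,y$ and $j$; (ii) $|f_j(x) - f_{j+1}(x)| \leq \beta \rho_j$ for all $x$ and $j$. Then $(f_j)$ converges uniformly to a map $f : [0,M]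 \to X$ which is $(1/s)$-Hölder continuous, with Hölder constant at most $\frac{\alpha}{\xi_1}\max(1,M) + \frac{2\beta}{\xi_1(1-\xi_2)}\max(1,M^{-1})$. -/
open Set Filter
open scoped Topology

/-- Uniform limits of a sequence of `(1/t)`-Hölder maps with controlled Hölder constants and
controlled uniform distances is `(1/s)`-Hölder, with an explicit constant. -/
theorem stmt6 {X : Type*} [NormedAddCommGroup X] [NormedSpace ℝ X] [CompleteSpace X]
    (t s M ξ₁ ξ₂ α β : ℝ) (ht : 1 ≤ t) (hts : t < s) (hM : 0 < M)
    (hξ₁ : 0 < ξ₁) (hξ : ξ₁ ≤ ξ₂) (hξ₂ : ξ₂ < 1) (hα : 0 < α) (hβ : 0 < β)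
    (ρ : ℕ → ℝ) (hρ0 : ρ 0 = 1)
    (hρ : ∀ j, ξ₁ * ρ j ≤ ρ (j + 1) ∧ ρ (j + 1) ≤ ξ₂ * ρ j)
    (f : ℕ → ℝ → X)
    (hHold : ∀ j, ∀ x ∈ Icc (0:ℝ) M, ∀ y ∈ Icc (0:ℝ) M,
      ‖f j x - f j y‖ ≤ α * ρ j ^ (1 - s / t) * |x - y| ^ (1 / t))
    (hclose : ∀ j, ∀ x ∈ Icc (0:ℝ) M, ‖f j x - f (j + 1) x‖ ≤ β * ρ j) :
    ∃ F : ℝ → X, TendstoUniformlyOn f F atTop (Icc 0 M) ∧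
      ∀ x ∈ Icc (0:ℝ) M, ∀ y ∈ Icc (0:ℝ) M,
        ‖F x - F y‖ ≤ (α / ξ₁ * max 1 M + 2 * β / (ξ₁ * (1 - ξ₂)) * max 1 M⁻¹)
          * |x - y| ^ (1 / s) := by
  classical
  have hξ₂0 : 0 < ξ₂ := lt_of_lt_of_le hξ₁ hξ
  have hξ₁1 : ξ₁ < 1 := lt_of_le_of_lt hξ hξ₂
  have h1ξ₂ : 0 < 1 - ξ₂ := by linarith
  have ht0 : 0 < t := by linarith
  have hs0 : 0 < s := by linarith
  have hρpos : ∀ j, 0 < ρ j := by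
    intro j
    induction j with
    | zero => rw [hρ0]; norm_num
    | succ n ih => exact lt_of_lt_of_le (mul_pos hξ₁ ih) (hρ n).1
  have hρgeom : ∀ j, ρ j ≤ ξ₂ ^ j := by
    intro j
    induction j with
    | zero => simp [hρ0]
    | succ n ih =>
      calc ρ (n + 1) ≤ ξ₂ * ρ n := (hρ n).2
        _ ≤ ξ₂ * ξ₂ ^ n := by nlinarith [hρpos n]
        _ = ξ₂ ^ (n + 1) := by ring
  have hρshift : ∀ j k, ρ (j + k) ≤ ξ₂ ^ k * ρ j := by
    intro j k
    induction k with
    | zero => simp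
    | succ n ih =>
      calc ρ (j + (n + 1)) = ρ (j + n + 1) := rfl
        _ ≤ ξ₂ * ρ (j + n) := (hρ (j + n)).2
        _ ≤ ξ₂ * (ξ₂ ^ n * ρ j) := by nlinarith
        _ = ξ₂ ^ (n + 1) * ρ j := by ring
  have hgsum : ∀ k : ℕ, ∑ i ∈ Finset.range k, ξ₂ ^ i ≤ (1 - ξ₂)⁻¹ := by
    intro k
    rw [geom_sum_eq (ne_of_lt hξ₂)]
    have h2 : (ξ₂ ^ k - 1) / (ξ₂ - 1) = (1 - ξ₂ ^ k) / (1 - ξ₂) := by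
      rw [← neg_div_neg_eq]; ring_nf
    rw [h2, ← one_div]
    have hk : (0:ℝ) ≤ ξ₂ ^ k := by positivity
    exact div_le_div₀ (by norm_num) (by linarith) (by linarith) le_rfl
  have htel : ∀ j k, ∀ x ∈ Icc (0:ℝ) M, ‖f j x - f (j + k) x‖ ≤ β * ρ j / (1 - ξ₂) := by
    intro j k x hx
    have hsum : ‖f j x - f (j + k) x‖ ≤ β * ∑ i ∈ Finset.range k, ρ (j + i) := by
      induction k with
      | zero => simp
      | succ n ih =>
        calc ‖f j x - f (j + (n + 1)) x‖
            ≤ ‖f j x - f (j + n) x‖ + ‖f (j + n) x - f (j + n + 1) x‖ := by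
              have h : f j x - f (j + (n + 1)) x
                  = (f j x - f (j + n) x) + (f (j + n) x - f (j + n + 1) x) := by
                rw [show j + (n + 1) = j + n + 1 from rfl]; abel
              rw [h]; exact norm_add_le _ _
          _ ≤ β * ∑ i ∈ Finset.range n, ρ (j + i) + β * ρ (j + n) :=
              add_le_add ih (hclose (j + n) x hx)
          _ = β * ∑ i ∈ Finset.range (n + 1), ρ (j + i) := by
              rw [Finset.sum_range_succ]; ring
    refine hsum.trans ?_
    rw [div_eq_mul_inv]
    have h1 : ∑ i ∈ Finset.range k, ρ (j + i) ≤ ρ j * (1 - ξ₂)⁻¹ := by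
      calc ∑ i ∈ Finset.range k, ρ (j + i) ≤ ∑ i ∈ Finset.range k, ξ₂ ^ i * ρ j :=
            Finset.sum_le_sum fun i _ => hρshift j i
        _ = (∑ i ∈ Finset.range k, ξ₂ ^ i) * ρ j := by rw [Finset.sum_mul]
        _ ≤ (1 - ξ₂)⁻¹ * ρ j := mul_le_mul_of_nonneg_right (hgsum k) (hρpos j).le
        _ = ρ j * (1 - ξ₂)⁻¹ := by ring
    calc β * ∑ i ∈ Finset.range k, ρ (j + i) ≤ β * (ρ j * (1 - ξ₂)⁻¹) :=
          mul_le_mul_of_nonneg_left h1 hβ.le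
      _ = β * ρ j * (1 - ξ₂)⁻¹ := by ring
  have hcau : ∀ x ∈ Icc (0:ℝ) M, ∃ L : X, Tendsto (fun j => f j x) atTop (𝓝 L) := by
    intro x hx
    have hc : CauchySeq (fun j => f j x) := by
      apply cauchySeq_of_le_geometric ξ₂ β hξ₂
      intro n
      rw [dist_eq_norm]
      calc ‖f n x - f (n + 1) x‖ ≤ β * ρ n := hclose n x hx
        _ ≤ β * ξ₂ ^ n := mul_le_mul_of_nonneg_left (hρgeom n) hβ.le
    exact cauchySeq_tendsto_of_complete hc
  set F : ℝ → X := fun x => if hx : x ∈ Icc (0:ℝ) M then (hcau x hx).choose else 0 with hFdef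
  have hF : ∀ x (hx : x ∈ Icc (0:ℝ) M), Tendsto (fun j => f j x) atTop (𝓝 (F x)) := by
    intro x hx
    rw [hFdef]; simp only [dif_pos hx]
    exact (hcau x hx).choose_spec
  have hFf : ∀ j, ∀ x ∈ Icc (0:ℝ) M, ‖F x - f j x‖ ≤ β * ρ j / (1 - ξ₂) := by
    intro j x hx
    have h1 : Tendsto (fun k => f (j + k) x) atTop (𝓝 (F x)) :=
      (hF x hx).comp (tendsto_atTop_atTop_of_monotone (fun a b hab => by omega)
        (fun n => ⟨n, by omega⟩))
    have hlim : Tendsto (fun k => ‖f (j + k) x - f j x‖) atTop (𝓝 ‖F x - f j x‖) :=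
      (h1.sub tendsto_const_nhds).norm
    refine le_of_tendsto hlim (Eventually.of_forall fun k => ?_)
    rw [norm_sub_rev]
    exact htel j k x hx
  refine ⟨F, ?_, ?_⟩
  · rw [Metric.tendstoUniformlyOn_iff]
    intro ε hε
    have hlim : Tendsto (fun n : ℕ => β * ξ₂ ^ n / (1 - ξ₂)) atTop (𝓝 0) := by
      have h0 := tendsto_pow_atTop_nhds_zero_of_lt_one hξ₂0.le hξ₂
      have h2 := (h0.const_mul β).div_const (1 - ξ₂)
      simpa using h2
    filter_upwards [hlim.eventually (gt_mem_nhds hε)] with n hn x hx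
    rw [dist_eq_norm]
    calc ‖F x - f n x‖ ≤ β * ρ n / (1 - ξ₂) := hFf n x hx
      _ ≤ β * ξ₂ ^ n / (1 - ξ₂) :=
          div_le_div₀ (by positivity) (mul_le_mul_of_nonneg_left (hρgeom n) hβ.le) h1ξ₂ le_rfl
      _ < ε := hn
  · intro x hx y hy
    rcases eq_or_ne x y with rfl | hxy
    · simp only [sub_self, norm_zero, abs_zero]
      rw [Real.zero_rpow (by positivity : (1:ℝ)/s ≠ 0), mul_zero]
    set d : ℝ := |x - y| with hddef
    have hd0 : 0 < d := abs_pos.mpr (sub_ne_zero.mpr hxy)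
    have hdM : d ≤ M := by
      rw [hddef, abs_sub_le_iff]
      constructor <;> [linarith [hx.1, hx.2, hy.1, hy.2]; linarith [hx.1, hx.2, hy.1, hy.2]]
    have hds : (0:ℝ) < d ^ (1/s) := Real.rpow_pos_of_pos hd0 _
    -- general estimate at any level m
    have key : ∀ m, ‖F x - F y‖ ≤
        2 * (β * ρ m / (1 - ξ₂)) + α * ρ m ^ (1 - s / t) * d ^ (1 / t) := by
      intro m
      calc ‖F x - F y‖ ≤ ‖F x - f m x‖ + ‖f m x - f m y‖ + ‖f m y - F y‖ := by
            have h : F x - F y = (F x - f m x) + (f m x - f m y) + (f m y - F y) := by abel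
            rw [h]; exact (norm_add_le _ _).trans (by gcongr; exact norm_add_le _ _)
        _ ≤ β * ρ m / (1 - ξ₂) + α * ρ m ^ (1 - s / t) * d ^ (1 / t)
              + β * ρ m / (1 - ξ₂) := by
            refine add_le_add (add_le_add (hFf m x hx) (hHold m x hx y hy)) ?_
            rw [norm_sub_rev]; exact hFf m y hy
        _ = 2 * (β * ρ m / (1 - ξ₂)) + α * ρ m ^ (1 - s / t) * d ^ (1 / t) := by ring
    have hmaxM : (1:ℝ) ≤ max 1 M := le_max_left _ _
    have hmaxMi : (1:ℝ) ≤ max 1 M⁻¹ := le_max_left _ _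
    have hden : 0 < ξ₁ * (1 - ξ₂) := mul_pos hξ₁ h1ξ₂
    have hC2 : 0 < 2 * β / (ξ₁ * (1 - ξ₂)) := div_pos (by linarith) hden
    have hCα : 0 < α / ξ₁ := div_pos hα hξ₁
    have hααξ : α ≤ α / ξ₁ := by
      rw [le_div_iff₀ hξ₁]
      have := mul_le_of_le_one_right hα.le hξ₁1.le
      linarith
    have hCβ : 2 * β / (1 - ξ₂) ≤ 2 * β / (ξ₁ * (1 - ξ₂)) := by
      apply div_le_div₀ (by linarith) le_rfl hden
      have := mul_le_of_le_one_left h1ξ₂.le hξ₁1.le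
      linarith
    rcases lt_or_ge d 1 with hd1 | hd1
    · -- small distance case
      set D : ℝ := d ^ (1/s) with hDdef
      have hD1 : D < 1 := Real.rpow_lt_one hd0.le hd1 (by positivity)
      have hD0 : 0 < D := hds
      have hex : ∃ j, ρ j ≤ D := by
        obtain ⟨n, hn⟩ := exists_pow_lt_of_lt_one hD0 hξ₂
        exact ⟨n, (hρgeom n).trans hn.le⟩
      set j := Nat.find hex with hjdef
      have hjD : ρ j ≤ D := Nat.find_spec hex
      have hj0 : j ≠ 0 := by
        intro h
        rw [h, hρ0] at hjD
        linarith
      obtain ⟨m, hm⟩ : ∃ m, j = m + 1 := ⟨j - 1, by omega⟩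
      have hmD : D < ρ m := by
        by_contra h
        exact Nat.find_min hex (by omega : m < j) (not_lt.mp h)
      have hmD' : ρ m ≤ D / ξ₁ := by
        have h1 : ξ₁ * ρ m ≤ ρ (m + 1) := (hρ m).1
        rw [← hm] at h1
        rw [le_div_iff₀ hξ₁]
        linarith
      have hrow : ρ m ^ (1 - s / t) ≤ D ^ (1 - s / t) := by
        apply Real.rpow_le_rpow_of_nonpos hD0 hmD.le
        have h1 : 1 < s / t := (one_lt_div ht0).mpr hts
        linarith
      have hDd : D ^ (1 - s / t) * d ^ (1 / t) = d ^ (1/s) := by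
        rw [hDdef, ← Real.rpow_mul hd0.le, ← Real.rpow_add hd0]
        congr 1
        field_simp
        ring
      have hterm1 : α * ρ m ^ (1 - s / t) * d ^ (1 / t) ≤ α * d ^ (1/s) := by
        calc α * ρ m ^ (1 - s / t) * d ^ (1 / t)
            ≤ α * D ^ (1 - s / t) * d ^ (1 / t) :=
              mul_le_mul_of_nonneg_right (mul_le_mul_of_nonneg_left hrow hα.le)
                (Real.rpow_nonneg hd0.le _)
          _ = α * (D ^ (1 - s / t) * d ^ (1 / t)) := by ring
          _ = α * d ^ (1/s) := by rw [hDd]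
      have hterm2 : 2 * (β * ρ m / (1 - ξ₂)) ≤ 2 * β / (ξ₁ * (1 - ξ₂)) * d ^ (1/s) := by
        have h1 : 2 * (β * ρ m / (1 - ξ₂)) ≤ 2 * (β * (D / ξ₁) / (1 - ξ₂)) := by
          gcongr
        refine h1.trans (le_of_eq ?_)
        field_simp
        ring
      calc ‖F x - F y‖ ≤ 2 * (β * ρ m / (1 - ξ₂)) + α * ρ m ^ (1 - s / t) * d ^ (1 / t) :=
            key m
        _ ≤ 2 * β / (ξ₁ * (1 - ξ₂)) * d ^ (1/s) + α * d ^ (1/s) := add_le_add hterm2 hterm1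
        _ ≤ (α / ξ₁ * max 1 M + 2 * β / (ξ₁ * (1 - ξ₂)) * max 1 M⁻¹) * d ^ (1/s) := by
            rw [add_mul, add_comm (α / ξ₁ * max 1 M * d ^ (1/s))]
            refine add_le_add ?_ ?_
            · refine mul_le_mul_of_nonneg_right ?_ hds.le
              refine le_mul_of_one_le_right hC2.le hmaxMi
            · refine mul_le_mul_of_nonneg_right ?_ hds.le
              calc α ≤ α / ξ₁ := hααξ
                _ ≤ α / ξ₁ * max 1 M := le_mul_of_one_le_right hCα.le hmaxM
    · -- large distance case : use level 0
      have hds1 : (1:ℝ) ≤ d ^ (1/s) := Real.one_le_rpow hd1 (by positivity)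
      have hkey0 := key 0
      rw [hρ0, Real.one_rpow] at hkey0
      have hθ0 : 0 ≤ 1/t - 1/s := by
        have := one_div_le_one_div_of_le ht0 hts.le
        linarith
      have hθ1 : 1/t - 1/s ≤ 1 := by
        have h1 : 1/t ≤ 1 := by
          rw [div_le_one ht0]; exact ht
        have h2 : 0 < 1/s := by positivity
        linarith
      have hsplit : d ^ (1/t) = d ^ (1/s) * d ^ (1/t - 1/s) := by
        rw [← Real.rpow_add hd0]; congr 1; ring
      have hd2 : d ^ (1/t - 1/s) ≤ max 1 M := by
        calc d ^ (1/t - 1/s) ≤ (max 1 M) ^ (1/t - 1/s) :=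
              Real.rpow_le_rpow hd0.le (hdM.trans (le_max_right _ _)) hθ0
          _ ≤ (max 1 M) ^ (1:ℝ) := Real.rpow_le_rpow_of_exponent_le hmaxM hθ1
          _ = max 1 M := Real.rpow_one _
      have hterm1 : α * d ^ (1/t) ≤ α / ξ₁ * max 1 M * d ^ (1/s) := by
        rw [hsplit]
        have h1 : α * (d ^ (1/s) * d ^ (1/t - 1/s)) ≤ α * (d ^ (1/s) * max 1 M) := by
          gcongr
        refine h1.trans ?_
        have h3 : (0:ℝ) ≤ d ^ (1/s) * max 1 M :=
          mul_nonneg (Real.rpow_nonneg (abs_nonneg _) _) (by linarith)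
        calc α * (d ^ (1/s) * max 1 M) ≤ α / ξ₁ * (d ^ (1/s) * max 1 M) :=
              mul_le_mul_of_nonneg_right hααξ h3
          _ = α / ξ₁ * max 1 M * d ^ (1/s) := by ring
      have hterm2 : 2 * (β * 1 / (1 - ξ₂)) ≤ 2 * β / (ξ₁ * (1 - ξ₂)) * max 1 M⁻¹ * d ^ (1/s) := by
        calc 2 * (β * 1 / (1 - ξ₂)) = 2 * β / (1 - ξ₂) := by ring
          _ ≤ 2 * β / (ξ₁ * (1 - ξ₂)) := hCβ
          _ ≤ 2 * β / (ξ₁ * (1 - ξ₂)) * max 1 M⁻¹ :=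
              le_mul_of_one_le_right hC2.le hmaxMi
          _ ≤ 2 * β / (ξ₁ * (1 - ξ₂)) * max 1 M⁻¹ * d ^ (1/s) :=
              le_mul_of_one_le_right (mul_nonneg hC2.le (by linarith)) hds1
      calc ‖F x - F y‖ ≤ 2 * (β * 1 / (1 - ξ₂)) + α * d ^ (1/t) := by
            refine hkey0.trans (le_of_eq ?_); ring
        _ ≤ 2 * β / (ξ₁ * (1 - ξ₂)) * max 1 M⁻¹ * d ^ (1/s)
            + α / ξ₁ * max 1 M * d ^ (1/s) := add_le_add hterm2 hterm1
        _ = (α / ξ₁ * max 1 M + 2 * β / (ξ₁ * (1 - ξ₂)) * max 1 M⁻¹) * d ^ (1/s) := by ring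
end

section
/- Let $\mathcal{F} = \{\phi_1,\dots,\phi_k\}$ be an IFS of contractions over a complete metric space with connected attractor $K$, all Lipschitz constants $L_i = \operatorname{Lip}(\phi_i) \in (0,1)$. Fix a finite word $w$ over $\{1,\dots,k\}$ and $0 < \delta < L_w$. If $x, y \in K_w := \phi_w(K)$, then there exist distinct words $w_1, \dots, w_n \in A_w^*(\delta)$ such that $x \in K_{w_1}$, $y \in K_{w_n}$, and $K_{w_i} \cap K_{w_{i+1}} \neq \emptyset$ for all $1 \leq i \leq n-1$. -/
/-!
Cut the cylinder `K_w` along the finitely many cylinders `K_u`, `u ∈ A_w^*(δ)`: these are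
compact, so closed, and they cover `K_w` because extending `w` letter by letter along the
self-similarity `K = ⋃ φ_i(K)` multiplies the weight by at most `max L_i < 1`, hence eventually
drops it below `δ`. Since `K_w` is connected, the graph on these words in which two words are
adjacent when their cylinders meet is connected between any two cylinders containing points of
`K_w`; a path in it without repeated vertices is the required chain of distinct words.
-/

open Set

/-- `φ_w = φ_{i₁} ∘ ⋯ ∘ φ_{iₙ}` for a word `w = i₁ ⋯ iₙ`. -/
noncomputable def compWord {X : Type*} {k : ℕ} (φ : Fin k → X → X)
    (w : List (Fin k)) : X → X :=
  w.foldr (fun i g => φ i ∘ g) id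

/-- The weight of a finite word: `L_w = L_{i₁} ⋯ L_{iₙ}`, with `L_ε = 1`. -/
noncomputable def wordWeight {k : ℕ} (L : Fin k → ℝ) (w : List (Fin k)) : ℝ :=
  (w.map L).prod

/-- Membership in `A^*(δ)`. -/
def memAstar {k : ℕ} (L : Fin k → ℝ) (δ : ℝ) (u : List (Fin k)) : Prop :=
  u ≠ [] ∧ wordWeight L u < δ ∧ δ ≤ wordWeight L u.dropLast

section IntersectionGraph

variable {X ι : Type*}

def intersectionGraph (F : ι → Set X) : SimpleGraph ι where
  Adj i j := i ≠ j ∧ (F i ∩ F j).Nonempty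
  symm := ⟨fun _ _ h => ⟨h.1.symm, inter_comm (F _) _ ▸ h.2⟩⟩
  loopless := ⟨fun _ h => h.1 rfl⟩

@[simp]
lemma intersectionGraph_adj {F : ι → Set X} {i j : ι} :
    (intersectionGraph F).Adj i j ↔ i ≠ j ∧ (F i ∩ F j).Nonempty :=
  Iff.rfl

lemma intersectionGraph_reachable_of_inter_nonempty {F : ι → Set X} {i j : ι}
    (h : (F i ∩ F j).Nonempty) : (intersectionGraph F).Reachable i j := by
  by_cases hij : i = j
  · exact hij ▸ SimpleGraph.Reachable.refl i
  · exact SimpleGraph.Adj.reachable (intersectionGraph_adj.2 ⟨hij, h⟩)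

variable [TopologicalSpace X] [Finite ι] {F : ι → Set X} {C : Set X}

/-- The union of the pieces reachable from `a` and the union of the others are disjoint closed
sets covering `C`. -/
lemma IsPreconnected.reachable_intersectionGraph (hF : ∀ i, IsClosed (F i))
    (hC : IsPreconnected C) (hCF : C ⊆ ⋃ i, F i) {x y : X} {a b : ι}
    (hx : x ∈ C) (hxa : x ∈ F a) (hy : y ∈ C) (hyb : y ∈ F b) :
    (intersectionGraph F).Reachable a b := by
  set R : Set ι := {j | (intersectionGraph F).Reachable a j}
  have hclosed : ∀ S : Set ι, IsClosed (⋃ j ∈ S, F j) :=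
    fun S => S.toFinite.isClosed_biUnion fun j _ => hF j
  have hcover : C ⊆ (⋃ j ∈ R, F j) ∪ ⋃ j ∈ Rᶜ, F j := by
    intro z hz
    obtain ⟨j, hzj⟩ := mem_iUnion.1 (hCF hz)
    by_cases hjR : j ∈ R
    · exact Or.inl (mem_biUnion hjR hzj)
    · exact Or.inr (mem_biUnion hjR hzj)
  by_contra hab
  obtain ⟨z, -, hzR, hzRc⟩ := isPreconnected_closed_iff.1 hC _ _ (hclosed R) (hclosed Rᶜ) hcover
    ⟨x, hx, mem_biUnion (SimpleGraph.Reachable.refl a) hxa⟩ ⟨y, hy, mem_biUnion hab hyb⟩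
  obtain ⟨j, hj, hzj⟩ := mem_iUnion₂.1 hzR
  obtain ⟨j', hj', hzj'⟩ := mem_iUnion₂.1 hzRc
  exact hj' (hj.trans (intersectionGraph_reachable_of_inter_nonempty ⟨z, hzj, hzj'⟩))

end IntersectionGraph

lemma SimpleGraph.Reachable.exists_injective_chain {V : Type*} {G : SimpleGraph V} {a b : V}
    (h : G.Reachable a b) :
    ∃ (n : ℕ) (f : ℕ → V), 0 < n ∧ (∀ i < n, ∀ j < n, f i = f j → i = j) ∧
      f 0 = a ∧ f (n - 1) = b ∧ ∀ i, i + 1 < n → G.Adj (f i) (f (i + 1)) := by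
  classical
  obtain ⟨p⟩ := h
  obtain ⟨q, hq⟩ := p.toPath
  refine ⟨q.length + 1, q.getVert, q.length.succ_pos, fun i hi j hj hij => ?_,
    q.getVert_zero, by simp, fun i hi => q.adj_getVert_succ (by omega)⟩
  exact hq.getVert_injOn (by simp only [mem_ofPred_eq]; omega)
    (by simp only [mem_ofPred_eq]; omega) hij

theorem IsPreconnected.exists_chain_of_finite_closed_cover {X ι : Type*} [TopologicalSpace X]
    [Finite ι] {F : ι → Set X} (hF : ∀ i, IsClosed (F i)) {C : Set X} (hC : IsPreconnected C)
    (hCF : C ⊆ ⋃ i, F i) {x y : X} (hx : x ∈ C) (hy : y ∈ C) :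
    ∃ (n : ℕ) (f : ℕ → ι), 0 < n ∧ (∀ i < n, ∀ j < n, f i = f j → i = j) ∧
      x ∈ F (f 0) ∧ y ∈ F (f (n - 1)) ∧
      ∀ i, i + 1 < n → (F (f i) ∩ F (f (i + 1))).Nonempty := by
  obtain ⟨a, hxa⟩ := mem_iUnion.1 (hCF hx)
  obtain ⟨b, hyb⟩ := mem_iUnion.1 (hCF hy)
  obtain ⟨n, f, hn, hinj, hf0, hfn, hadj⟩ :=
    (hC.reachable_intersectionGraph hF hCF hx hxa hy hyb).exists_injective_chain
  exact ⟨n, f, hn, hinj, hf0 ▸ hxa, hfn ▸ hyb,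
    fun i hi => (intersectionGraph_adj.1 (hadj i hi)).2⟩

lemma exists_nonneg_lt_one_forall_le {ι : Type*} [Finite ι] {f : ι → ℝ} (hf : ∀ i, f i < 1) :
    ∃ r, 0 ≤ r ∧ r < 1 ∧ ∀ i, f i ≤ r := by
  cases isEmpty_or_nonempty ι
  · exact ⟨0, le_rfl, one_pos, isEmptyElim⟩
  · obtain ⟨i₀, hi₀⟩ := Finite.exists_max f
    exact ⟨max 0 (f i₀), le_max_left _ _, max_lt one_pos (hf i₀),
      fun i => (hi₀ i).trans (le_max_right _ _)⟩

section Words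

variable {X : Type*} {k : ℕ}

lemma compWord_append (φ : Fin k → X → X) (v u : List (Fin k)) :
    compWord φ (v ++ u) = compWord φ v ∘ compWord φ u := by
  induction v with
  | nil => rfl
  | cons i v ih => simp only [compWord, List.cons_append, List.foldr_cons] at ih ⊢; rw [ih]; rfl

lemma continuous_compWord [TopologicalSpace X] {φ : Fin k → X → X}
    (hφ : ∀ i, Continuous (φ i)) (w : List (Fin k)) : Continuous (compWord φ w) := by
  induction w with
  | nil => exact continuous_id
  | cons i w ih => exact (hφ i).comp ih

lemma wordWeight_append (L : Fin k → ℝ) (v u : List (Fin k)) :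
    wordWeight L (v ++ u) = wordWeight L v * wordWeight L u := by
  simp [wordWeight]

lemma wordWeight_concat (L : Fin k → ℝ) (v : List (Fin k)) (i : Fin k) :
    wordWeight L (v ++ [i]) = wordWeight L v * L i := by
  simp [wordWeight]

variable {L : Fin k → ℝ}

lemma wordWeight_nonneg (hL0 : ∀ i, 0 ≤ L i) (v : List (Fin k)) : 0 ≤ wordWeight L v :=
  List.prod_nonneg fun _ ha => by
    obtain ⟨i, -, rfl⟩ := List.mem_map.1 ha
    exact hL0 i

lemma wordWeight_le_pow (hL0 : ∀ i, 0 ≤ L i) {r : ℝ} (hLr : ∀ i, L i ≤ r) (v : List (Fin k)) :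
    wordWeight L v ≤ r ^ v.length := by
  induction v with
  | nil => simp [wordWeight]
  | cons i v ih =>
    have hcons : wordWeight L (i :: v) = L i * wordWeight L v := by simp [wordWeight]
    rw [hcons, List.length_cons, pow_succ']
    exact mul_le_mul (hLr i) ih (wordWeight_nonneg hL0 v) ((hL0 i).trans (hLr i))

lemma finite_setOf_memAstar (hL0 : ∀ i, 0 ≤ L i) {r : ℝ} (hr0 : 0 ≤ r) (hLr : ∀ i, L i ≤ r)
    (hr1 : r < 1) {δ : ℝ} (hδ0 : 0 < δ) : {u | memAstar L δ u}.Finite := by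
  obtain ⟨N, hN⟩ := exists_pow_lt_of_lt_one hδ0 hr1
  refine (List.finite_length_le (Fin k) (N + 1)).subset fun u hu => ?_
  by_contra hlen
  have hle : r ^ u.dropLast.length ≤ r ^ N :=
    pow_le_pow_of_le_one hr0 hr1.le (by rw [List.length_dropLast]; simp at hlen; omega)
  linarith [wordWeight_le_pow hL0 hLr u.dropLast, hu.2.2]

variable {φ : Fin k → X → X} {K : Set X}

lemma exists_mem_image_compWord_concat (hK : K ⊆ ⋃ i, φ i '' K) {v : List (Fin k)} {z : X}
    (hz : z ∈ compWord φ v '' K) :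
    ∃ i, z ∈ compWord φ (v ++ [i]) '' K := by
  obtain ⟨p, hp, rfl⟩ := hz
  obtain ⟨i, q, hq, rfl⟩ := mem_iUnion.1 (hK hp)
  exact ⟨i, q, hq, by rw [compWord_append]; rfl⟩

/-- `n` bounds the number of letters still to be appended, since each letter multiplies the
weight by at most `r`. -/
lemma exists_memAstar_of_mul_pow_lt (hL0 : ∀ i, 0 ≤ L i) (hK : K ⊆ ⋃ i, φ i '' K) {r : ℝ}
    (hr0 : 0 ≤ r) (hLr : ∀ i, L i ≤ r) {δ : ℝ} (n : ℕ)
    {v : List (Fin k)} (hδv : δ ≤ wordWeight L v) (hn : wordWeight L v * r ^ n < δ)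
    {z : X} (hz : z ∈ compWord φ v '' K) :
    ∃ u, v <+: u ∧ memAstar L δ u ∧ z ∈ compWord φ u '' K := by
  induction n generalizing v with
  | zero => exact absurd (hδv.trans_lt (by simpa using hn)) (lt_irrefl δ)
  | succ n ih =>
    obtain ⟨i, hzi⟩ := exists_mem_image_compWord_concat hK hz
    by_cases hlt : wordWeight L (v ++ [i]) < δ
    · exact ⟨v ++ [i], List.prefix_append v [i],
        ⟨by simp, hlt, by rwa [List.dropLast_concat]⟩, hzi⟩
    · have hn' : wordWeight L (v ++ [i]) * r ^ n < δ := calc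
        wordWeight L (v ++ [i]) * r ^ n = wordWeight L v * L i * r ^ n := by
          rw [wordWeight_concat]
        _ ≤ wordWeight L v * r * r ^ n := by
          gcongr
          · exact wordWeight_nonneg hL0 v
          · exact hLr i
        _ = wordWeight L v * r ^ (n + 1) := by ring
        _ < δ := hn
      obtain ⟨u, hpre, hu, hzu⟩ := ih (not_lt.1 hlt) hn' hzi
      exact ⟨u, (List.prefix_append v [i]).trans hpre, hu, hzu⟩

lemma exists_memAstar_of_mem_image (hL0 : ∀ i, 0 ≤ L i) (hK : K ⊆ ⋃ i, φ i '' K) {r : ℝ}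
    (hr0 : 0 ≤ r) (hLr : ∀ i, L i ≤ r) (hr1 : r < 1) {δ : ℝ} (hδ0 : 0 < δ)
    {v : List (Fin k)} (hδv : δ ≤ wordWeight L v) {z : X}
    (hz : z ∈ compWord φ v '' K) :
    ∃ u, v <+: u ∧ memAstar L δ u ∧ z ∈ compWord φ u '' K := by
  have hv : 0 < wordWeight L v := hδ0.trans_le hδv
  obtain ⟨n, hn⟩ := exists_pow_lt_of_lt_one (div_pos hδ0 hv) hr1
  exact exists_memAstar_of_mul_pow_lt hL0 hK hr0 hLr n hδv
    (by rwa [lt_div_iff₀ hv, mul_comm] at hn) hz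

end Words

theorem stmt7_general {X : Type*} [MetricSpace X] {k : ℕ}
    (φ : Fin k → X → X) (L : Fin k → ℝ)
    (hL : ∀ i, 0 < L i ∧ L i < 1)
    (hLip : ∀ i x y, dist (φ i x) (φ i y) ≤ L i * dist x y)
    (K : Set X) (hKc : IsCompact K)
    (hK : K = ⋃ i, φ i '' K) (hconn : IsConnected K)
    (w : List (Fin k)) (δ : ℝ) (hδ0 : 0 < δ) (hδ : δ < wordWeight L w)
    (x y : X) (hx : x ∈ compWord φ w '' K) (hy : y ∈ compWord φ w '' K) :
    ∃ (n : ℕ) (ws : ℕ → List (Fin k)), 0 < n ∧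
      (∀ i < n, ∀ j < n, ws i = ws j → i = j) ∧
      (∀ i < n, w <+: ws i ∧ memAstar L δ (ws i)) ∧
      x ∈ compWord φ (ws 0) '' K ∧ y ∈ compWord φ (ws (n - 1)) '' K ∧
      ∀ i, i + 1 < n →
        (compWord φ (ws i) '' K ∩ compWord φ (ws (i + 1)) '' K).Nonempty := by
  obtain ⟨r, hr0, hr1, hLr⟩ := exists_nonneg_lt_one_forall_le fun i => (hL i).2
  have hL0 : ∀ i, 0 ≤ L i := fun i => (hL i).1.le
  have hcont : ∀ v, Continuous (compWord φ v) :=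
    continuous_compWord fun i => (LipschitzWith.of_dist_le' (hLip i)).continuous
  let A : Set (List (Fin k)) := {u | w <+: u ∧ memAstar L δ u}
  have : Finite A :=
    ((finite_setOf_memAstar hL0 hr0 hLr hr1 hδ0).subset fun _ hu => hu.2).to_subtype
  have hcover : compWord φ w '' K ⊆ ⋃ u : A, compWord φ u '' K := fun z hz => by
    obtain ⟨u, hwu, hu, hzu⟩ :=
      exists_memAstar_of_mem_image hL0 hK.subset hr0 hLr hr1 hδ0 hδ.le hz
    exact mem_iUnion.2 ⟨⟨u, hwu, hu⟩, hzu⟩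
  obtain ⟨n, f, hn, hinj, hx0, hyn, hchain⟩ :=
    IsPreconnected.exists_chain_of_finite_closed_cover
      (fun u : A => (hKc.image (hcont u)).isClosed)
      (hconn.isPreconnected.image _ (hcont w).continuousOn) hcover hx hy
  exact ⟨n, fun i => f i, hn, fun i hi j hj h => hinj i hi j hj (Subtype.ext h),
    fun i _ => (f i).2, hx0, hyn, hchain⟩

/-- Chain lemma: in a connected attractor, any two points of a cylinder `K_w` are joined by
a chain of cylinders at scale `δ`. -/
theorem stmt7 {X : Type*} [MetricSpace X] [CompleteSpace X] {k : ℕ}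
    (φ : Fin k → X → X) (L : Fin k → ℝ)
    (hL : ∀ i, 0 < L i ∧ L i < 1)
    (hLip : ∀ i x y, dist (φ i x) (φ i y) ≤ L i * dist x y)
    (K : Set X) (hKne : K.Nonempty) (hKc : IsCompact K)
    (hK : K = ⋃ i, φ i '' K) (hconn : IsConnected K)
    (w : List (Fin k)) (δ : ℝ) (hδ0 : 0 < δ) (hδ : δ < wordWeight L w)
    (x y : X) (hx : x ∈ compWord φ w '' K) (hy : y ∈ compWord φ w '' K) :
    ∃ (n : ℕ) (ws : ℕ → List (Fin k)), 0 < n ∧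
      (∀ i < n, ∀ j < n, ws i = ws j → i = j) ∧
      (∀ i < n, w <+: ws i ∧ memAstar L δ (ws i)) ∧
      x ∈ compWord φ (ws 0) '' K ∧ y ∈ compWord φ (ws (n - 1)) '' K ∧
      ∀ i, i + 1 < n →
        (compWord φ (ws i) '' K ∩ compWord φ (ws (i + 1)) '' K).Nonempty :=
  stmt7_general φ L hL hLip K hKc hK hconn w δ hδ0 hδ x y hx hy
end

section
/- Let $N \geq 2$ and integers $2 \leq n_1 \leq \cdots \leq n_N$. Define a metric $d$ on $\mathbb{R}^N$ by $d(x,x') = \left(\sum_{i=1}^N |x_i - x_i'|^{2\log_{n_i} n_1}\right)^{1/2}$. Then for every index tuple $\mathbf{i} = (i_1,\dots,i_N)$, the affine map $\phi_{\mathbf{i}}(x_1,\dots,x_N) = (n_1^{-1}(i_1-1+x_1),\dots,n_N^{-1}(i_N-1+x_N))$ is a similarity of $(\mathbb{R}^N, d)$ with ratio $n_1^{-1}$: $d(\phi_{\mathbf{i}}(x), \phi_{\mathbf{i}}(x')) = n_1^{-1} d(x,x')$ for all $x, x' \in \mathbb{R}^N$. -/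
open Set

private lemma rpow_add_le' {a b p : ℝ} (ha : 0 ≤ a) (hb : 0 ≤ b) (hp : 0 ≤ p) (hp1 : p ≤ 1) :
    (a + b) ^ p ≤ a ^ p + b ^ p := by
  have h := NNReal.rpow_add_le_add_rpow a.toNNReal b.toNNReal hp hp1
  have h' := NNReal.coe_le_coe.2 h
  rw [NNReal.coe_add, NNReal.coe_rpow, NNReal.coe_rpow, NNReal.coe_rpow, NNReal.coe_add,
    Real.coe_toNNReal _ ha, Real.coe_toNNReal _ hb] at h'
  exact h'

private lemma sq_rpow_half {a p : ℝ} (ha : 0 ≤ a) : (a ^ (p / 2)) ^ 2 = a ^ p := by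
  rw [← Real.rpow_natCast (a ^ (p / 2)) 2, ← Real.rpow_mul ha]
  norm_num

/-- The snowflaked product metric `d` on `ℝ^N` is a metric, and each generating affine map of
a self-affine sponge is a similarity of `(ℝ^N, d)` with ratio `n₁⁻¹`. -/
theorem stmt15 (N : ℕ) (hN : 2 ≤ N) (n : Fin N → ℕ) (hn : ∀ j, 2 ≤ n j)
    (hmono : Monotone n) :
    let d : (Fin N → ℝ) → (Fin N → ℝ) → ℝ := fun x x' =>
      (∑ j, |x j - x' j| ^ (2 * Real.logb (n j) (n ⟨0, by omega⟩))) ^ (1 / 2 : ℝ)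
    (∀ x, d x x = 0) ∧ (∀ x y, d x y = d y x) ∧
    (∀ x y, d x y = 0 → x = y) ∧
    (∀ x y z, d x z ≤ d x y + d y z) ∧
    ∀ I : Fin N → ℕ, (∀ j, 1 ≤ I j ∧ I j ≤ n j) →
      ∀ x x' : Fin N → ℝ,
        d (fun j => (n j : ℝ)⁻¹ * ((I j : ℝ) - 1 + x j))
          (fun j => (n j : ℝ)⁻¹ * ((I j : ℝ) - 1 + x' j))
        = (n ⟨0, by omega⟩ : ℝ)⁻¹ * d x x' := by
  intro d
  have hd : ∀ x x' : Fin N → ℝ, d x x' =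
      (∑ j, |x j - x' j| ^ (2 * Real.logb (n j) (n ⟨0, by omega⟩))) ^ (1 / 2 : ℝ) :=
    fun _ _ => rfl
  set i0 : Fin N := ⟨0, by omega⟩ with hi0
  have hn1 : ∀ j, (1 : ℝ) < n j := fun j => by
    exact_mod_cast lt_of_lt_of_le one_lt_two (hn j)
  set e : Fin N → ℝ := fun j => 2 * Real.logb (n j) (n i0) with he
  have hepos : ∀ j, 0 < e j := fun j => by
    have : 0 < Real.logb (n j) (n i0) := Real.logb_pos (hn1 j) (hn1 i0)
    simp only [he]; linarith
  have hele : ∀ j, e j ≤ 2 := fun j => by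
    have hle : (n i0 : ℝ) ≤ n j := by exact_mod_cast hmono (Fin.mk_le_mk.2 (Nat.zero_le _))
    have : Real.logb (n j) (n i0) ≤ Real.logb (n j) (n j) :=
      Real.logb_le_logb_of_le (hn1 j) (by linarith [hn1 i0]) hle
    rw [Real.logb_self_eq_one (hn1 j)] at this
    simp only [he]; linarith
  -- d x x = 0
  have hrefl : ∀ x, d x x = 0 := fun x => by
    rw [hd]
    have : ∀ j : Fin N, |x j - x j| ^ (2 * Real.logb (n j) (n i0)) = 0 := fun j => by
      rw [sub_self, abs_zero, Real.zero_rpow (hepos j).ne']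
    rw [Finset.sum_congr rfl fun j _ => this j]
    simp
  have hsymm : ∀ x y, d x y = d y x := fun x y => by
    rw [hd, hd]
    congr 1
    exact Finset.sum_congr rfl fun j _ => by rw [abs_sub_comm]
  have hsum_nonneg : ∀ x y : Fin N → ℝ,
      (0:ℝ) ≤ ∑ j, |x j - y j| ^ (2 * Real.logb (n j) (n i0)) := fun x y =>
    Finset.sum_nonneg fun j _ => Real.rpow_nonneg (abs_nonneg _) _
  have heq : ∀ x y, d x y = 0 → x = y := fun x y h => by
    rw [hd] at h
    have hS := (Real.rpow_eq_zero (hsum_nonneg x y) (by norm_num)).1 h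
    funext j
    have := (Finset.sum_eq_zero_iff_of_nonneg
      (fun j _ => Real.rpow_nonneg (abs_nonneg _) _)).1 hS j (Finset.mem_univ j)
    have habs := (Real.rpow_eq_zero (abs_nonneg _) (hepos j).ne').1 this
    have := abs_eq_zero.1 habs
    linarith [sub_eq_zero.1 this]
  -- triangle
  have htri : ∀ x y z, d x z ≤ d x y + d y z := fun x y z => by
    rw [hd, hd, hd]
    set f : Fin N → ℝ := fun j => |x j - y j| ^ (e j / 2) with hf
    set g : Fin N → ℝ := fun j => |y j - z j| ^ (e j / 2) with hg
    have hfn : ∀ j, 0 ≤ f j := fun j => Real.rpow_nonneg (abs_nonneg _) _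
    have hgn : ∀ j, 0 ≤ g j := fun j => Real.rpow_nonneg (abs_nonneg _) _
    have key : ∀ j : Fin N, |x j - z j| ^ (e j) ≤ (f j + g j) ^ 2 := fun j => by
      have h1 : |x j - z j| ≤ |x j - y j| + |y j - z j| := abs_sub_le _ _ _
      have h2 : |x j - z j| ^ (e j / 2) ≤ f j + g j := by
        calc |x j - z j| ^ (e j / 2)
            ≤ (|x j - y j| + |y j - z j|) ^ (e j / 2) :=
              Real.rpow_le_rpow (abs_nonneg _) h1 (by linarith [hepos j])
          _ ≤ f j + g j := rpow_add_le' (abs_nonneg _) (abs_nonneg _)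
              (by linarith [hepos j]) (by linarith [hele j])
      calc |x j - z j| ^ (e j) = (|x j - z j| ^ (e j / 2)) ^ 2 :=
            (sq_rpow_half (abs_nonneg _)).symm
        _ ≤ (f j + g j) ^ 2 := by
            have := Real.rpow_nonneg (abs_nonneg (x j - z j)) (e j / 2)
            nlinarith
    have hCS : ∑ j, f j * g j ≤
        Real.sqrt (∑ j, f j ^ 2) * Real.sqrt (∑ j, g j ^ 2) :=
      Real.sum_mul_le_sqrt_mul_sqrt _ f g
    have hA : (∑ j, f j ^ 2) = ∑ j, |x j - y j| ^ (e j) :=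
      Finset.sum_congr rfl fun j _ => sq_rpow_half (abs_nonneg _)
    have hB : (∑ j, g j ^ 2) = ∑ j, |y j - z j| ^ (e j) :=
      Finset.sum_congr rfl fun j _ => sq_rpow_half (abs_nonneg _)
    have step : ∑ j, |x j - z j| ^ (e j) ≤
        (Real.sqrt (∑ j, f j ^ 2) + Real.sqrt (∑ j, g j ^ 2)) ^ 2 := by
      calc ∑ j, |x j - z j| ^ (e j) ≤ ∑ j, (f j + g j) ^ 2 :=
            Finset.sum_le_sum fun j _ => key j
        _ = (∑ j, f j ^ 2) + 2 * (∑ j, f j * g j) + (∑ j, g j ^ 2) := by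
            rw [Finset.mul_sum, ← Finset.sum_add_distrib, ← Finset.sum_add_distrib]
            exact Finset.sum_congr rfl fun j _ => by ring
        _ ≤ (Real.sqrt (∑ j, f j ^ 2) + Real.sqrt (∑ j, g j ^ 2)) ^ 2 := by
            have hA' : (0:ℝ) ≤ ∑ j, f j ^ 2 := Finset.sum_nonneg fun j _ => sq_nonneg _
            have hB' : (0:ℝ) ≤ ∑ j, g j ^ 2 := Finset.sum_nonneg fun j _ => sq_nonneg _
            have := Real.sq_sqrt hA'
            have := Real.sq_sqrt hB'
            nlinarith [Real.sqrt_nonneg (∑ j, f j ^ 2), Real.sqrt_nonneg (∑ j, g j ^ 2)]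
    rw [← Real.sqrt_eq_rpow, ← Real.sqrt_eq_rpow, ← Real.sqrt_eq_rpow]
    calc Real.sqrt (∑ j, |x j - z j| ^ (e j))
        ≤ Real.sqrt ((Real.sqrt (∑ j, f j ^ 2) + Real.sqrt (∑ j, g j ^ 2)) ^ 2) :=
          Real.sqrt_le_sqrt step
      _ = Real.sqrt (∑ j, f j ^ 2) + Real.sqrt (∑ j, g j ^ 2) :=
          Real.sqrt_sq (by positivity)
      _ = Real.sqrt (∑ j, |x j - y j| ^ (e j)) + Real.sqrt (∑ j, |y j - z j| ^ (e j)) := by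
          rw [hA, hB]
  refine ⟨hrefl, hsymm, heq, htri, ?_⟩
  intro I _ x x'
  rw [hd, hd]
  have hterm : ∀ j : Fin N,
      |(n j : ℝ)⁻¹ * ((I j : ℝ) - 1 + x j) - (n j : ℝ)⁻¹ * ((I j : ℝ) - 1 + x' j)| ^ (e j)
      = ((n i0 : ℝ)⁻¹) ^ (2:ℝ) * |x j - x' j| ^ (e j) := fun j => by
    have hnj : (0:ℝ) < n j := by linarith [hn1 j]
    have h1 : (n j : ℝ)⁻¹ * ((I j : ℝ) - 1 + x j) - (n j : ℝ)⁻¹ * ((I j : ℝ) - 1 + x' j)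
        = (n j : ℝ)⁻¹ * (x j - x' j) := by ring
    rw [h1, abs_mul, abs_of_nonneg (by positivity : (0:ℝ) ≤ (n j : ℝ)⁻¹),
      Real.mul_rpow (by positivity) (abs_nonneg _)]
    congr 1
    have : ((n j : ℝ)⁻¹) ^ (e j) = ((n j : ℝ) ^ (e j))⁻¹ := Real.inv_rpow hnj.le _
    rw [this]
    have h2 : (n j : ℝ) ^ (e j) = (n i0 : ℝ) ^ (2:ℝ) := by
      have hej : e j = Real.logb (n j) (n i0) * 2 := by simp only [he]; ring
      rw [hej, Real.rpow_mul hnj.le, Real.rpow_logb hnj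
        (by linarith [hn1 j] : (n j : ℝ) ≠ 1) (by linarith [hn1 i0] : (0:ℝ) < n i0)]
    rw [h2, ← Real.inv_rpow (by positivity)]
  rw [Finset.sum_congr rfl fun j _ => hterm j, ← Finset.mul_sum,
    Real.mul_rpow (by positivity) (hsum_nonneg x x'),
    ← Real.rpow_mul (by positivity : (0:ℝ) ≤ (n i0 : ℝ)⁻¹)]
  norm_num
end
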